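/- arXiv:1411.0281 — 2 statements merged into one kernel-verified Lean document; each statement's English description precedes it below -/
import Mathlib

section
/- For two probability distributions p and q on a finite set with variational distance V(p,q) = ε ≤ 1/2, the absolute difference of their Shannon entropies satisfies |H(p) - H(q)| ≤ ε · log(|X|/ε), where |X| is the cardinality of the support set. -/
open scoped BigOperators

/-- Shannon entropy in bits of a pmf on a finite set. -/
noncomputable def ent {α : Type*} [Fintype α] (p : α → ℝ) : ℝ :=
  -∑ x, p x * Real.logb 2 (p x)

/-- Total variational distance `∑ |p x - q x|`. -/
noncomputable def tv {α : Type*} [Fintype α] (p q : α → ℝ) : ℝ :=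
  ∑ x, |p x - q x|

/-!
Write `η t = -t log t`, so that the entropy is `∑ η (p x)` up to the factor `1 / log 2`.
The whole argument is the pointwise bound `|η s - η t| ≤ η |s - t|` for `s, t ∈ [0, 1]` with
`|s - t| ≤ 1/2`, summed over `x` and followed by Jensen's inequality for the concave `η`:
a vector `a ≥ 0` of total mass `ε` on `n` points has `∑ η (a x) ≤ n η (ε / n) = ε log (n / ε)`.
For the pointwise bound, fix `d = t - s ≥ 0`. Since `η' = -log - 1` is decreasing,
`y ↦ η y - η (y + d)` increases on `[0, 1 - d]`, so `η s - η t` lies between its values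
`-η d` at `0` and `η (1 - d)` at `1 - d`; finally `η (1 - d) ≤ η d` when `d ≤ 1/2`.
-/

open Real Finset

namespace Real

theorem monotoneOn_negMulLog_sub_negMulLog_add {d : ℝ} (hd : 0 ≤ d) :
    MonotoneOn (fun y ↦ negMulLog y - negMulLog (y + d)) (Set.Ici 0) := by
  have hderiv : ∀ y : ℝ, 0 < y → HasDerivAt (fun y ↦ negMulLog y - negMulLog (y + d))
      (log (y + d) - log y) y := fun y hy ↦ by
    have hyd : y + d ≠ 0 := by positivity
    refine ((hasDerivAt_negMulLog hy.ne').sub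
      ((hasDerivAt_negMulLog hyd).comp y ((hasDerivAt_id y).add_const d))).congr_deriv ?_
    ring
  refine monotoneOn_of_deriv_nonneg (convex_Ici 0) (by fun_prop) (fun y hy ↦ ?_) fun y hy ↦ ?_
  · rw [interior_Ici] at hy
    exact (hderiv y hy).differentiableAt.differentiableWithinAt
  · rw [interior_Ici] at hy
    rw [(hderiv y hy).deriv, sub_nonneg]
    exact log_le_log hy (by linarith)

theorem negMulLog_one_sub_le {d : ℝ} (hd : 0 ≤ d) (hd2 : d ≤ 1 / 2) :
    negMulLog (1 - d) ≤ negMulLog d := by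
  set g : ℝ → ℝ := fun y ↦ negMulLog y - negMulLog (1 - y)
  have hderiv : ∀ y ∈ Set.Ioo (0 : ℝ) (1 / 2), HasDerivAt g (-log (y * (1 - y)) - 2) y := by
    rintro y ⟨hy0, hy1⟩
    refine ((hasDerivAt_negMulLog hy0.ne').sub
      ((hasDerivAt_negMulLog (by linarith : 1 - y ≠ 0)).comp y
        ((hasDerivAt_id y).const_sub 1))).congr_deriv ?_
    rw [log_mul hy0.ne' (by linarith)]
    ring
  -- `g` vanishes at `0` and `1/2`, and is concave in between since `y (1 - y)` increases there.
  have hconcave : ConcaveOn ℝ (Set.Icc 0 (1 / 2)) g := by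
    refine AntitoneOn.concaveOn_of_deriv (convex_Icc 0 (1 / 2)) (by fun_prop) ?_ ?_ <;>
      rw [interior_Icc]
    · exact fun y hy ↦ (hderiv y hy).differentiableAt.differentiableWithinAt
    · intro x hx y hy hxy
      rw [(hderiv x hx).deriv, (hderiv y hy).deriv, sub_le_sub_iff_right, neg_le_neg_iff]
      exact log_le_log (mul_pos hx.1 (by linarith [hx.2])) (by nlinarith [hx.2, hy.2])
  have hmin := hconcave.ge_on_segment (Set.left_mem_Icc.2 (by norm_num))
    (Set.right_mem_Icc.2 (by norm_num)) (by rw [segment_eq_Icc (by norm_num)]; exact ⟨hd, hd2⟩)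
  norm_num [g] at hmin
  linarith

theorem abs_negMulLog_sub_le {s t : ℝ} (hs0 : 0 ≤ s) (hs1 : s ≤ 1) (ht0 : 0 ≤ t) (ht1 : t ≤ 1)
    (hst : |s - t| ≤ 1 / 2) : |negMulLog s - negMulLog t| ≤ negMulLog |s - t| := by
  wlog hle : s ≤ t generalizing s t
  · rw [abs_sub_comm, abs_sub_comm s] at *
    exact this ht0 ht1 hs0 hs1 hst (le_of_not_ge hle)
  obtain ⟨d, hd, rfl⟩ : ∃ d, 0 ≤ d ∧ t = s + d := ⟨t - s, by linarith, by ring⟩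
  rw [show s - (s + d) = -d by ring, abs_neg, abs_of_nonneg hd] at *
  have hmono := monotoneOn_negMulLog_sub_negMulLog_add hd
  have hlower := hmono (Set.mem_Ici.2 le_rfl) hs0 hs0
  have hupper := hmono hs0 (Set.mem_Ici.2 (by linarith : 0 ≤ 1 - d)) (by linarith)
  simp only [zero_add, negMulLog_zero, sub_add_cancel, negMulLog_one, sub_zero] at hlower hupper
  rw [abs_le]
  exact ⟨by linarith, hupper.trans (negMulLog_one_sub_le hd hst)⟩

theorem sum_negMulLog_le {ι : Type*} [Fintype ι] (a : ι → ℝ) (ha : ∀ i, 0 ≤ a i) :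
    ∑ i, negMulLog (a i) ≤ (∑ i, a i) * log (Fintype.card ι / ∑ i, a i) := by
  rcases isEmpty_or_nonempty ι with hι | hι
  · simp
  set n : ℝ := (Fintype.card ι : ℝ)
  have hn : 0 < n := by positivity
  have hjensen := concaveOn_negMulLog.le_map_sum (t := univ) (w := fun _ ↦ n⁻¹) (p := a)
    (fun _ _ ↦ by positivity) (by simp [n, hn.ne']) fun i _ ↦ ha i
  simp only [smul_eq_mul, ← mul_sum] at hjensen
  calc ∑ i, negMulLog (a i) = n * (n⁻¹ * ∑ i, negMulLog (a i)) := by field_simp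
    _ ≤ n * negMulLog (n⁻¹ * ∑ i, a i) := by gcongr
    _ = (∑ i, a i) * log (n / ∑ i, a i) := by
      rw [negMulLog, ← inv_div, log_inv, div_eq_inv_mul]
      field_simp

end Real

theorem ent_eq_sum_negMulLog_div {α : Type*} [Fintype α] (p : α → ℝ) :
    ent p = (∑ x, negMulLog (p x)) / log 2 := by
  simp only [ent, logb, negMulLog, sum_div, ← sum_neg_distrib]
  congr 1 with x
  ring

/-- Continuity of entropy (Csiszár–Körner): if the variational distance
`V(p,q) = ε ≤ 1/2`, then `|H(p) - H(q)| ≤ ε · log₂(|X|/ε)`. -/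
theorem entropy_continuity {α : Type*} [Fintype α] (p q : α → ℝ) (ε : ℝ)
    (hp0 : ∀ x, 0 ≤ p x) (hp1 : ∑ x, p x = 1)
    (hq0 : ∀ x, 0 ≤ q x) (hq1 : ∑ x, q x = 1)
    (hε : tv p q = ε) (hε2 : ε ≤ 1 / 2) :
    |ent p - ent q| ≤ ε * Real.logb 2 ((Fintype.card α : ℝ) / ε) := by
  subst hε
  have hp_le : ∀ x, p x ≤ 1 := fun x ↦ hp1 ▸ single_le_sum (fun i _ ↦ hp0 i) (mem_univ x)
  have hq_le : ∀ x, q x ≤ 1 := fun x ↦ hq1 ▸ single_le_sum (fun i _ ↦ hq0 i) (mem_univ x)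
  have hdiff_le : ∀ x, |p x - q x| ≤ 1 / 2 := fun x ↦
    (single_le_sum (f := fun i ↦ |p i - q i|) (fun i _ ↦ abs_nonneg _) (mem_univ x)).trans hε2
  have hnats : |∑ x, negMulLog (p x) - ∑ x, negMulLog (q x)|
      ≤ tv p q * log (Fintype.card α / tv p q) :=
    calc |∑ x, negMulLog (p x) - ∑ x, negMulLog (q x)|
        ≤ ∑ x, |negMulLog (p x) - negMulLog (q x)| := by
          rw [← sum_sub_distrib]; exact abs_sum_le_sum_abs _ _
      _ ≤ ∑ x, negMulLog |p x - q x| := sum_le_sum fun x _ ↦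
          abs_negMulLog_sub_le (hp0 x) (hp_le x) (hq0 x) (hq_le x) (hdiff_le x)
      _ ≤ tv p q * log (Fintype.card α / tv p q) :=
          sum_negMulLog_le (fun x ↦ |p x - q x|) fun x ↦ abs_nonneg _
  rw [ent_eq_sum_negMulLog_div, ent_eq_sum_negMulLog_div, ← sub_div, abs_div,
    abs_of_pos (log_pos one_lt_two), logb, ← mul_div_assoc]
  gcongr
end

section
/- Successive cancellation simulation divergence bound (abstract form): let p be a distribution of a random vector A^{1:N} over 𝔽₂^N, let 𝒱 ⊆ {1,…,N}, and define p̃ by p̃(a^j | a^{1:j-1}) = 1/2 for j ∈ 𝒱 and p̃(a^j | a^{1:j-1}) = p(a^j | a^{1:j-1}) for j ∉ 𝒱. If H(A^j | A^{1:j-1}) > 1 - δ for every j ∈ 𝒱, then D(p ‖ p̃) ≤ |𝒱| · δ ≤ N δ. -/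
open scoped BigOperators

/-- Kullback–Leibler divergence in bits. -/
noncomputable def kl {α : Type*} [Fintype α] (p q : α → ℝ) : ℝ :=
  ∑ x, p x * Real.logb 2 (p x / q x)

/-- Keep the coordinates in `S`, set the others to `false`. -/
def maskSet {N : ℕ} (S : Finset (Fin N)) (a : Fin N → Bool) : Fin N → Bool :=
  fun i => if i ∈ S then a i else false

/-- Marginal distribution of the coordinates in `S` (represented on the full space,
supported on masked vectors). -/
noncomputable def marg {N : ℕ} (p : (Fin N → Bool) → ℝ) (S : Finset (Fin N)) :
    (Fin N → Bool) → ℝ :=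
  fun b => ∑ a : Fin N → Bool, if maskSet S a = b then p a else 0

/-- Conditional entropy `H(A^j | A^{1:j-1})` in bits. -/
noncomputable def condEnt {N : ℕ} (p : (Fin N → Bool) → ℝ) (j : Fin N) : ℝ :=
  ent (marg p (Finset.Iic j)) - ent (marg p (Finset.Iio j))

/-- Conditional probability `p(a^j | a^{1:j-1})` evaluated at the vector `a`. -/
noncomputable def condProb {N : ℕ} (p : (Fin N → Bool) → ℝ) (j : Fin N)
    (a : Fin N → Bool) : ℝ :=
  marg p (Finset.Iic j) (maskSet (Finset.Iic j) a) /
    marg p (Finset.Iio j) (maskSet (Finset.Iio j) a)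

/-- The simulated distribution: bits in `𝒱` are drawn uniformly given the past,
the other bits keep `p`'s conditionals. -/
noncomputable def ptilde {N : ℕ} (p : (Fin N → Bool) → ℝ) (𝒱 : Finset (Fin N)) :
    (Fin N → Bool) → ℝ :=
  fun a => ∏ j : Fin N, if j ∈ 𝒱 then (1 : ℝ) / 2 else condProb p j a

/-!
By the chain rule `p(a) = ∏ⱼ p(aʲ | a^{1:j-1})`, so `log₂ (p(a) / p̃(a))` is the sum over `j ∈ 𝒱`
of `1 + log₂ p(aʲ | a^{1:j-1})`. Averaging over `p` gives the exact identity
`D(p ‖ p̃) = ∑_{j ∈ 𝒱} (1 - H(Aʲ | A^{1:j-1}))`, and every summand is below `δ`.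
-/

open Finset Real

section Fiber

variable {α β : Type*} [Fintype α] [DecidableEq β]

lemma le_sum_fiber (p : α → ℝ) (hp0 : ∀ a, 0 ≤ p a) (f : α → β) (a : α) :
    p a ≤ ∑ a', if f a' = f a then p a' else 0 := by
  simpa using single_le_sum (f := fun a' => if f a' = f a then p a' else 0)
    (fun a' _ => by split_ifs <;> simp [hp0]) (mem_univ a)

lemma sum_mul_logb_sum_fiber [Fintype β] (p : α → ℝ) (f : α → β) :
    ∑ a, p a * logb 2 (∑ a', if f a' = f a then p a' else 0) =
      -ent (fun b => ∑ a', if f a' = b then p a' else 0) := by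
  rw [ent, neg_neg]
  simp_rw [sum_mul, ite_mul, zero_mul]
  rw [sum_comm]
  simp

end Fiber

section Prefix

variable {N : ℕ} (p : (Fin N → Bool) → ℝ)

lemma marg_maskSet_pos (hp0 : ∀ a, 0 ≤ p a) (S : Finset (Fin N)) {a : Fin N → Bool}
    (ha : 0 < p a) : 0 < marg p S (maskSet S a) :=
  ha.trans_le (le_sum_fiber p hp0 (maskSet S) a)

lemma sum_mul_logb_marg (S : Finset (Fin N)) :
    ∑ a, p a * logb 2 (marg p S (maskSet S a)) = -ent (marg p S) :=
  sum_mul_logb_sum_fiber p (maskSet S)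

lemma sum_mul_logb_condProb (hp0 : ∀ a, 0 ≤ p a) (j : Fin N) :
    ∑ a, p a * logb 2 (condProb p j a) = -condEnt p j := by
  have hsplit : ∀ a, p a * logb 2 (condProb p j a) =
      p a * logb 2 (marg p (Iic j) (maskSet (Iic j) a)) -
        p a * logb 2 (marg p (Iio j) (maskSet (Iio j) a)) := by
    intro a
    rcases (hp0 a).eq_or_lt with ha | ha
    · simp [← ha]
    · rw [condProb, logb_div (marg_maskSet_pos p hp0 _ ha).ne'
        (marg_maskSet_pos p hp0 _ ha).ne', mul_sub]
  rw [sum_congr rfl fun a _ => hsplit a, sum_sub_distrib, sum_mul_logb_marg, sum_mul_logb_marg,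
    condEnt]
  ring

def prefixSet (k : ℕ) : Finset (Fin N) := univ.filter fun i => (i : ℕ) < k

lemma Iio_eq_prefixSet (j : Fin N) : Iio j = prefixSet (j : ℕ) := by
  ext i
  simp only [prefixSet, mem_Iio, mem_filter, mem_univ, true_and, Fin.lt_def]

lemma Iic_eq_prefixSet (j : Fin N) : Iic j = prefixSet ((j : ℕ) + 1) := by
  ext i
  simp only [prefixSet, mem_Iic, mem_filter, mem_univ, true_and, Fin.le_def, Nat.lt_succ_iff]

lemma marg_prefixSet_zero (a : Fin N → Bool) :
    marg p (prefixSet 0) (maskSet (prefixSet 0) a) = ∑ a, p a := by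
  have hmask : ∀ b : Fin N → Bool, maskSet (prefixSet 0) b = maskSet (prefixSet 0) a :=
    fun b => funext fun i => by simp [maskSet, prefixSet]
  simp [marg, hmask]

lemma marg_prefixSet_self (a : Fin N → Bool) :
    marg p (prefixSet N) (maskSet (prefixSet N) a) = p a := by
  have hmask : ∀ b : Fin N → Bool, maskSet (prefixSet N) b = b := fun b => funext fun i => by
    simp [maskSet, prefixSet]
  simp [marg, hmask]

/-- The chain rule: the log-ratios of successive prefix marginals telescope. -/
lemma sum_logb_condProb (hp0 : ∀ a, 0 ≤ p a) (hp1 : ∑ a, p a = 1) {a : Fin N → Bool}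
    (ha : 0 < p a) : ∑ j, logb 2 (condProb p j a) = logb 2 (p a) := by
  set F : ℕ → ℝ := fun k => logb 2 (marg p (prefixSet k) (maskSet (prefixSet k) a))
  have hstep : ∀ j : Fin N, logb 2 (condProb p j a) = F (j + 1) - F j := fun j => by
    rw [condProb, logb_div (marg_maskSet_pos p hp0 _ ha).ne' (marg_maskSet_pos p hp0 _ ha).ne',
      Iic_eq_prefixSet, Iio_eq_prefixSet]
  rw [sum_congr rfl fun j _ => hstep j, Fin.sum_univ_eq_sum_range (fun k => F (k + 1) - F k),
    sum_range_sub]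
  simp only [F, marg_prefixSet_self, marg_prefixSet_zero, hp1, logb_one, sub_zero]

lemma logb_div_ptilde (𝒱 : Finset (Fin N)) (hp0 : ∀ a, 0 ≤ p a) (hp1 : ∑ a, p a = 1)
    {a : Fin N → Bool} (ha : 0 < p a) :
    logb 2 (p a / ptilde p 𝒱 a) = ∑ j ∈ 𝒱, (1 + logb 2 (condProb p j a)) := by
  have hcond : ∀ j, 0 < condProb p j a := fun j =>
    div_pos (marg_maskSet_pos p hp0 _ ha) (marg_maskSet_pos p hp0 _ ha)
  have hfactor : ∀ j, 0 < if j ∈ 𝒱 then (1 : ℝ) / 2 else condProb p j a := fun j => by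
    split_ifs
    · norm_num
    · exact hcond j
  have hterm : ∀ j, logb 2 (condProb p j a) -
      logb 2 (if j ∈ 𝒱 then (1 : ℝ) / 2 else condProb p j a) =
        if j ∈ 𝒱 then 1 + logb 2 (condProb p j a) else 0 := fun j => by
    split_ifs
    · rw [one_div, logb_inv, logb_self_eq_one one_lt_two]
      ring
    · exact sub_self _
  have hptilde : 0 < ptilde p 𝒱 a := prod_pos fun j _ => hfactor j
  rw [logb_div ha.ne' hptilde.ne', ← sum_logb_condProb p hp0 hp1 ha, ptilde,
    logb_prod _ _ fun j _ => (hfactor j).ne', ← sum_sub_distrib, sum_congr rfl fun j _ => hterm j,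
    sum_ite_mem, univ_inter]

lemma kl_ptilde_eq (𝒱 : Finset (Fin N)) (hp0 : ∀ a, 0 ≤ p a) (hp1 : ∑ a, p a = 1) :
    kl p (ptilde p 𝒱) = ∑ j ∈ 𝒱, (1 - condEnt p j) := by
  have hpoint : ∀ a, p a * logb 2 (p a / ptilde p 𝒱 a) =
      ∑ j ∈ 𝒱, (p a + p a * logb 2 (condProb p j a)) := fun a => by
    rcases (hp0 a).eq_or_lt with ha | ha
    · simp [← ha]
    · rw [logb_div_ptilde p 𝒱 hp0 hp1 ha, mul_sum]
      simp_rw [mul_add, mul_one]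
  rw [kl, sum_congr rfl fun a _ => hpoint a, sum_comm]
  refine sum_congr rfl fun j _ => ?_
  rw [sum_add_distrib, hp1, sum_mul_logb_condProb p hp0, sub_eq_add_neg]

end Prefix

/-- Successive cancellation simulation divergence bound: if every bit in `𝒱` has
conditional entropy `> 1 - δ`, then `D(p ‖ p̃) ≤ |𝒱| δ ≤ N δ`. -/
theorem kl_ptilde_le {N : ℕ} (p : (Fin N → Bool) → ℝ) (𝒱 : Finset (Fin N)) (δ : ℝ)
    (hp0 : ∀ a, 0 ≤ p a) (hp1 : ∑ a, p a = 1) (hδ : 0 < δ)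
    (hH : ∀ j ∈ 𝒱, condEnt p j > 1 - δ) :
    kl p (ptilde p 𝒱) ≤ (𝒱.card : ℝ) * δ ∧ (𝒱.card : ℝ) * δ ≤ (N : ℝ) * δ := by
  refine ⟨?_, ?_⟩
  · calc kl p (ptilde p 𝒱) = ∑ j ∈ 𝒱, (1 - condEnt p j) := kl_ptilde_eq p 𝒱 hp0 hp1
      _ ≤ ∑ _j ∈ 𝒱, δ := sum_le_sum fun j hj => by linarith [hH j hj]
      _ = 𝒱.card * δ := by rw [sum_const, nsmul_eq_mul]
  · have hcard : (𝒱.card : ℝ) ≤ N := by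
      exact_mod_cast (card_le_univ 𝒱).trans_eq (Fintype.card_fin N)
    exact mul_le_mul_of_nonneg_right hcard hδ.le
end
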